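/- Under the Yule model, the probability distribution of the i-th row of the F-matrix does not depend on the total number of leaves n (for any n > i). -/
import Mathlib


open scoped Classical

/-- Collapse the pair of lineage labels `{a, b}`: the larger label is merged
into the smaller one and all larger labels are shifted down by one. -/
def collapse (a b x : ℕ) : ℕ :=
  if x = max a b then min a b else if max a b < x then x - 1 else x

/-- The lineage map of the coalescent after `s` merge events: `chainMap n ω s i`
is the label of the lineage currently containing leaf `i`, where `ω` lists the
pair of lineages merged at each step. -/
def chainMap (n : ℕ) (ω : Fin (n - 1) → Fin n × Fin n) : ℕ → Fin n → ℕ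
  | 0 => fun i => (i : ℕ)
  | s + 1 => fun i =>
      if h : s < n - 1 then
        collapse ((ω ⟨s, h⟩).1 : ℕ) ((ω ⟨s, h⟩).2 : ℕ) (chainMap n ω s i)
      else chainMap n ω s i

/-- `ω` is a valid sequence of coalescent merge choices: at step `s` (when
`n - s` lineages remain) an unordered pair of the `n - s` current lineages is
chosen. -/
def ValidSeq (n : ℕ) (ω : Fin (n - 1) → Fin n × Fin n) : Prop :=
  ∀ s : Fin (n - 1), ((ω s).1 : ℕ) < ((ω s).2 : ℕ) ∧ ((ω s).2 : ℕ) < n - (s : ℕ)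

/-- The sample space of the Yule / Kingman coalescent with `n` leaves: all
sequences of merge choices, each such sequence being equally likely (at every
step a uniformly chosen pair of the extant lineages merges). -/
noncomputable def coalSpace (n : ℕ) : Finset (Fin (n - 1) → Fin n × Fin n) :=
  Finset.univ.filter (ValidSeq n)

/-- The block (set of leaves) of the lineage containing leaf `i` when `k`
lineages remain. -/
noncomputable def blockOf (n : ℕ) (ω : Fin (n - 1) → Fin n × Fin n) (k : ℕ)
    (i : Fin n) : Finset (Fin n) :=
  Finset.univ.filter (fun j => chainMap n ω (n - k) j = chainMap n ω (n - k) i)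

/-- `Zext n ω i k`: leaf `i` is still an external branch (a singleton lineage)
when `k` lineages remain. -/
def Zext (n : ℕ) (ω : Fin (n - 1) → Fin n × Fin n) (i : Fin n) (k : ℕ) : Prop :=
  blockOf n ω k i = {i}

/-- The partition (set of blocks) of the leaves when `k` lineages remain. -/
noncomputable def blocksAt (n : ℕ) (ω : Fin (n - 1) → Fin n × Fin n) (k : ℕ) :
    Finset (Finset (Fin n)) :=
  Finset.univ.image (fun i => blockOf n ω k i)

/-- The F-matrix of the ranked tree shape generated by the coalescent `ω`:
`FmatOf n ω i j` is the number of branches extant when `j + 1` branches are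
present that have not yet bifurcated by the interval with `i + 1` branches,
i.e. the number of common blocks of the partitions into `j + 1` and `i + 1`
lineages. -/
noncomputable def FmatOf (n : ℕ) (ω : Fin (n - 1) → Fin n × Fin n) (i j : ℕ) : ℕ :=
  (blocksAt n ω (j + 1) ∩ blocksAt n ω (i + 1)).card

/-- The D-matrix entry `D i j = F i j - F i (j-1)`: the number of children of
the node creating the `(j+1)`-st branch that have not bifurcated by interval
`i`. -/
noncomputable def DmatOf (n : ℕ) (ω : Fin (n - 1) → Fin n × Fin n) (i j : ℕ) : ℤ :=
  (FmatOf n ω i j : ℤ) - (FmatOf n ω i (j - 1) : ℤ)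

/-- Probability of an event under the Yule / Kingman coalescent with `n`
leaves (uniform measure on merge-choice sequences). -/
noncomputable def coalP (n : ℕ) (A : (Fin (n - 1) → Fin n × Fin n) → Prop) : ℝ :=
  (((coalSpace n).filter A).card : ℝ) / ((coalSpace n).card : ℝ)

/-- Expectation of a random variable under the Yule / Kingman coalescent with
`n` leaves. -/
noncomputable def coalE (n : ℕ) (X : (Fin (n - 1) → Fin n × Fin n) → ℝ) : ℝ :=
  (∑ ω ∈ coalSpace n, X ω) / ((coalSpace n).card : ℝ)


/- ### auxiliary development -/

lemma collapse_lt {a b k x : ℕ} (hab : a < b) (hbk : b < k) (hx : x < k) :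
    collapse a b x < k - 1 := by
  unfold collapse
  rw [max_eq_right hab.le, min_eq_left hab.le]
  split_ifs <;> omega

lemma collapse_surj {a b k y : ℕ} (hab : a < b) (hbk : b < k) (hy : y < k - 1) :
    ∃ x, x < k ∧ collapse a b x = y := by
  unfold collapse
  rw [max_eq_right hab.le, min_eq_left hab.le]
  by_cases hyb : y < b
  · exact ⟨y, by omega, by split_ifs <;> omega⟩
  · exact ⟨y + 1, by omega, by split_ifs <;> omega⟩

lemma chainMap_range (n : ℕ) (ω : Fin (n - 1) → Fin n × Fin n) (hω : ValidSeq n ω) :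
    ∀ s, s ≤ n - 1 → (∀ m : Fin n, chainMap n ω s m < n - s) ∧
      (∀ ℓ, ℓ < n - s → ∃ m : Fin n, chainMap n ω s m = ℓ) := by
  intro s
  induction s with
  | zero =>
    intro _
    exact ⟨fun m => by simpa [chainMap] using m.2,
      fun ℓ hl => ⟨⟨ℓ, by omega⟩, by simp [chainMap]⟩⟩
  | succ s IH =>
    intro hs
    have hs' : s < n - 1 := by omega
    obtain ⟨IH1, IH2⟩ := IH (by omega)
    obtain ⟨hab, hbn⟩ := hω ⟨s, hs'⟩
    have hbn' : ((ω ⟨s, hs'⟩).2 : ℕ) < n - s := hbn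
    constructor
    · intro m
      have hx := IH1 m
      simp only [chainMap, dif_pos hs']
      have := collapse_lt hab hbn' hx
      omega
    · intro ℓ hℓ
      obtain ⟨x, hxk, hxc⟩ := collapse_surj hab hbn' (by omega : ℓ < (n - s) - 1)
      obtain ⟨m, hm⟩ := IH2 x hxk
      refine ⟨m, ?_⟩
      simp only [chainMap, dif_pos hs', hm, hxc]

def tmap (τ : ℕ → ℕ × ℕ) : ℕ → ℕ → ℕ
  | 0, x => x
  | t + 1, x => collapse (τ t).1 (τ t).2 (tmap τ t x)

noncomputable def tailAbs (n i : ℕ) (ω : Fin (n - 1) → Fin n × Fin n) (t : ℕ) : ℕ × ℕ :=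
  if h : n - 1 - i + t < n - 1 then
    (((ω ⟨n - 1 - i + t, h⟩).1 : ℕ), ((ω ⟨n - 1 - i + t, h⟩).2 : ℕ))
  else (0, 0)

lemma chainMap_decomp (n i : ℕ) (hi : i < n) (ω : Fin (n - 1) → Fin n × Fin n) :
    ∀ t, t ≤ i → ∀ m : Fin n,
      chainMap n ω (n - 1 - i + t) m = tmap (tailAbs n i ω) t (chainMap n ω (n - 1 - i) m) := by
  intro t
  induction t with
  | zero => intro _ m; simp [tmap]
  | succ t IH =>
    intro ht m
    have ht' : n - 1 - i + t < n - 1 := by omega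
    have e : n - 1 - i + (t + 1) = (n - 1 - i + t) + 1 := by omega
    rw [e]
    simp only [chainMap, dif_pos ht']
    rw [IH (by omega) m]
    simp only [tmap, tailAbs, dif_pos ht']

noncomputable def Gcard (i : ℕ) (τ : ℕ → ℕ × ℕ) (t : ℕ) : ℕ :=
  ((Finset.range (i + 1)).filter
    (fun ℓ => ∀ ℓ' < i + 1, tmap τ t ℓ' = tmap τ t ℓ → ℓ' = ℓ)).card

lemma fmat_eq (n i j : ℕ) (hi : i < n) (hj : j ≤ i) (ω : Fin (n - 1) → Fin n × Fin n)
    (hω : ValidSeq n ω) :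
    FmatOf n ω i j = Gcard i (tailAbs n i ω) (i - j) := by
  have h1 : n - (i + 1) = n - 1 - i := by omega
  have h2 : n - (j + 1) = n - 1 - j := by omega
  set τ := tailAbs n i ω with hτ
  set f : Fin n → ℕ := chainMap n ω (n - 1 - i) with hfdef
  set g : ℕ → ℕ := tmap τ (i - j) with hgdef
  have hfl : ∀ m, f m < i + 1 := by
    intro m
    have := (chainMap_range n ω hω (n - 1 - i) (by omega)).1 m
    have e : n - (n - 1 - i) = i + 1 := by omega
    rw [e] at this
    exact this
  have hfs : ∀ ℓ, ℓ < i + 1 → ∃ m, f m = ℓ := by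
    intro ℓ hℓ
    exact (chainMap_range n ω hω (n - 1 - i) (by omega)).2 ℓ (by omega)
  have hcomp : ∀ m, chainMap n ω (n - 1 - j) m = g (f m) := by
    intro m
    have hd := chainMap_decomp n i hi ω (i - j) (by omega) m
    rwa [show n - 1 - i + (i - j) = n - 1 - j by omega] at hd
  have hbi : ∀ m : Fin n, blockOf n ω (i + 1) m =
      Finset.univ.filter (fun m' => f m' = f m) := by
    intro m
    unfold blockOf
    rw [h1]
  have hbj : ∀ m : Fin n, blockOf n ω (j + 1) m =
      Finset.univ.filter (fun m' => g (f m') = g (f m)) := by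
    intro m
    unfold blockOf
    rw [h2]
    apply Finset.filter_congr
    intro m' _
    rw [hcomp, hcomp]
  have key : blocksAt n ω (j + 1) ∩ blocksAt n ω (i + 1)
      = ((Finset.range (i + 1)).filter (fun ℓ => ∀ ℓ' < i + 1, g ℓ' = g ℓ → ℓ' = ℓ)).image
          (fun ℓ => Finset.univ.filter (fun m' : Fin n => f m' = ℓ)) := by
    ext B
    simp only [Finset.mem_inter, blocksAt, Finset.mem_image, Finset.mem_univ, true_and,
      Finset.mem_filter, Finset.mem_range]
    constructor
    · rintro ⟨⟨m', hB'⟩, ⟨m, hB⟩⟩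
      rw [hbi] at hB
      rw [hbj] at hB'
      refine ⟨f m, ⟨hfl m, ?_⟩, hB⟩
      intro ℓ' hℓ' hgg
      obtain ⟨m'', hm''⟩ := hfs ℓ' hℓ'
      have hmem : m'' ∈ B := by
        rw [← hB']
        simp only [Finset.mem_filter, Finset.mem_univ, true_and]
        have hmB : m ∈ B := by
          rw [← hB]; simp
        rw [← hB'] at hmB
        simp only [Finset.mem_filter, Finset.mem_univ, true_and] at hmB
        rw [hm'', hgg, ← hmB]
      rw [← hB] at hmem
      simp only [Finset.mem_filter, Finset.mem_univ, true_and] at hmem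
      rw [← hm'', hmem]
    · rintro ⟨ℓ, ⟨hℓ, hgood⟩, hB⟩
      obtain ⟨m, hm⟩ := hfs ℓ hℓ
      constructor
      · refine ⟨m, ?_⟩
        rw [hbj, ← hB, hm]
        ext m''
        simp only [Finset.mem_filter, Finset.mem_univ, true_and]
        constructor
        · intro h
          exact hgood (f m'') (hfl m'') h
        · intro h
          rw [h]
      · refine ⟨m, ?_⟩
        rw [hbi, ← hB, hm]
  rw [FmatOf, key, Finset.card_image_of_injOn, Gcard]
  intro ℓ₁ h₁ ℓ₂ h₂ hE
  simp only at hE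
  simp only [Finset.coe_filter, Finset.mem_range, Set.mem_setOf_eq] at h₁ h₂
  obtain ⟨m, hm⟩ := hfs ℓ₁ h₁.1
  have : m ∈ Finset.univ.filter (fun m' : Fin n => f m' = ℓ₂) := by
    rw [← hE]; simp [hm]
  simp only [Finset.mem_filter, Finset.mem_univ, true_and] at this
  rw [← hm, this]

/- ### counting -/

noncomputable def PreSet (n i : ℕ) : Finset (Fin (n - 1 - i) → Fin n × Fin n) :=
  Finset.univ.filter
    (fun σ => ∀ s : Fin (n - 1 - i),
      ((σ s).1 : ℕ) < ((σ s).2 : ℕ) ∧ ((σ s).2 : ℕ) < n - (s : ℕ))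

def combine (n i : ℕ) (hn : i < n) (σ : Fin (n - 1 - i) → Fin n × Fin n)
    (τ : Fin i → Fin (i + 1) × Fin (i + 1)) : Fin (n - 1) → Fin n × Fin n :=
  fun s =>
    if h : (s : ℕ) < n - 1 - i then σ ⟨s, h⟩
    else
      (Fin.castLE hn (τ ⟨(s : ℕ) - (n - 1 - i), by have := s.2; omega⟩).1,
       Fin.castLE hn (τ ⟨(s : ℕ) - (n - 1 - i), by have := s.2; omega⟩).2)

lemma tail_combine (n i : ℕ) (hn : i < n) (σ : Fin (n - 1 - i) → Fin n × Fin n)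
    (τ : Fin i → Fin (i + 1) × Fin (i + 1)) :
    tailAbs n i (combine n i hn σ τ) = tailAbs (i + 1) i τ := by
  funext t
  unfold tailAbs
  by_cases ht : t < i
  · rw [dif_pos (by omega : n - 1 - i + t < n - 1),
      dif_pos (by omega : (i + 1) - 1 - i + t < (i + 1) - 1)]
    unfold combine
    rw [dif_neg (by simp only [Fin.val_mk]; omega)]
    have e1 : n - 1 - i + t - (n - 1 - i) = t := by omega
    have e2 : (i + 1) - 1 - i + t = t := by omega
    simp only [e1, e2, Fin.coe_castLE]
  · rw [dif_neg (by omega), dif_neg (by omega)]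

lemma combine_mem (n i : ℕ) (hn : i < n) (σ : Fin (n - 1 - i) → Fin n × Fin n)
    (hσ : σ ∈ PreSet n i) (τ : Fin i → Fin (i + 1) × Fin (i + 1))
    (hτ : τ ∈ coalSpace (i + 1)) : combine n i hn σ τ ∈ coalSpace n := by
  simp only [PreSet, coalSpace, Finset.mem_filter, Finset.mem_univ, true_and] at hσ hτ ⊢
  intro s
  unfold combine
  by_cases h : (s : ℕ) < n - 1 - i
  · rw [dif_pos h]
    exact hσ ⟨s, h⟩
  · rw [dif_neg h]
    have hs2 := s.2
    have ht : (s : ℕ) - (n - 1 - i) < i := by omega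
    have := hτ ⟨(s : ℕ) - (n - 1 - i), ht⟩
    simp only [Fin.val_mk] at this
    simp only [Fin.coe_castLE]
    refine ⟨this.1, ?_⟩
    have := this.2
    omega


noncomputable def tailOf (n i : ℕ) (ω : Fin (n - 1) → Fin n × Fin n) (t : Fin i) :
    Fin (i + 1) × Fin (i + 1) :=
  (⟨(tailAbs n i ω (t : ℕ)).1 % (i + 1), Nat.mod_lt _ i.succ_pos⟩,
   ⟨(tailAbs n i ω (t : ℕ)).2 % (i + 1), Nat.mod_lt _ i.succ_pos⟩)

lemma tailAbs_bounds (n i : ℕ) (hn : i < n) (ω : Fin (n - 1) → Fin n × Fin n)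
    (hω : ValidSeq n ω) (t : ℕ) (ht : t < i) :
    (tailAbs n i ω t).1 < (tailAbs n i ω t).2 ∧ (tailAbs n i ω t).2 < i + 1 - t := by
  unfold tailAbs
  rw [dif_pos (by omega : n - 1 - i + t < n - 1)]
  have h := hω ⟨n - 1 - i + t, by omega⟩
  simp only [Fin.val_mk] at h
  exact ⟨h.1, by omega⟩

lemma tailOf_val (n i : ℕ) (hn : i < n) (ω : Fin (n - 1) → Fin n × Fin n)
    (hω : ValidSeq n ω) (t : Fin i) :
    ((tailOf n i ω t).1 : ℕ) = (tailAbs n i ω (t : ℕ)).1 ∧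
      ((tailOf n i ω t).2 : ℕ) = (tailAbs n i ω (t : ℕ)).2 := by
  have hb := tailAbs_bounds n i hn ω hω (t : ℕ) t.2
  unfold tailOf
  constructor
  · simp only [Fin.val_mk]
    exact Nat.mod_eq_of_lt (by omega)
  · simp only [Fin.val_mk]
    exact Nat.mod_eq_of_lt (by omega)

lemma tailOf_valid (n i : ℕ) (hn : i < n) (ω : Fin (n - 1) → Fin n × Fin n)
    (hω : ValidSeq n ω) : ValidSeq (i + 1) (tailOf n i ω) := by
  intro t
  have hb := tailAbs_bounds n i hn ω hω (t : ℕ) t.2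
  have hv := tailOf_val n i hn ω hω t
  rw [hv.1, hv.2]
  exact ⟨hb.1, by omega⟩

lemma tailAbs_tailOf (n i : ℕ) (hn : i < n) (ω : Fin (n - 1) → Fin n × Fin n)
    (hω : ValidSeq n ω) : tailAbs (i + 1) i (tailOf n i ω) = tailAbs n i ω := by
  funext u
  by_cases hu : u < i
  · have hv := tailOf_val n i hn ω hω ⟨u, hu⟩
    conv_lhs => rw [tailAbs]
    rw [dif_pos (by omega : (i + 1) - 1 - i + u < (i + 1) - 1)]
    have e2 : (i + 1) - 1 - i + u = u := by omega
    simp only [e2]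
    rw [show ((⟨u, by omega⟩ : Fin ((i+1)-1))) = (⟨u, hu⟩ : Fin i) from rfl] at *
    rw [hv.1, hv.2]
  · conv_lhs => rw [tailAbs]
    rw [dif_neg (by omega)]
    rw [tailAbs, dif_neg (by omega)]

lemma combine_tailOf (n i : ℕ) (hn : i < n) (ω : Fin (n - 1) → Fin n × Fin n)
    (hω : ValidSeq n ω) :
    combine n i hn (fun s => ω ⟨(s : ℕ), by have := s.2; omega⟩) (tailOf n i ω) = ω := by
  funext s
  unfold combine
  by_cases h : (s : ℕ) < n - 1 - i
  · rw [dif_pos h]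
  · rw [dif_neg h]
    have hs2 := s.2
    have ht : (s : ℕ) - (n - 1 - i) < i := by omega
    have hv := tailOf_val n i hn ω hω ⟨(s : ℕ) - (n - 1 - i), ht⟩
    have e : n - 1 - i + ((s : ℕ) - (n - 1 - i)) = (s : ℕ) := by omega
    have habs : tailAbs n i ω ((s : ℕ) - (n - 1 - i)) = (((ω s).1 : ℕ), ((ω s).2 : ℕ)) := by
      unfold tailAbs
      rw [dif_pos (by omega : n - 1 - i + ((s : ℕ) - (n - 1 - i)) < n - 1)]
      have : (⟨n - 1 - i + ((s : ℕ) - (n - 1 - i)), by omega⟩ : Fin (n - 1)) = s := by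
        apply Fin.ext
        simp only [Fin.val_mk]
        omega
      rw [this]
    rw [habs] at hv
    apply Prod.ext
    · apply Fin.ext
      simp only [Fin.coe_castLE]
      exact hv.1
    · apply Fin.ext
      simp only [Fin.coe_castLE]
      exact hv.2

lemma count_eq (n i : ℕ) (hn : i < n) (E : (ℕ → ℕ × ℕ) → Prop) :
    ((coalSpace n).filter (fun ω => E (tailAbs n i ω))).card =
      (PreSet n i).card *
        ((coalSpace (i + 1)).filter (fun τ => E (tailAbs (i + 1) i τ))).card := by
  rw [← Finset.card_product]
  symm
  apply Finset.card_bij (fun p _ => combine n i hn p.1 p.2)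
  · rintro ⟨σ, τ⟩ hp
    rw [Finset.mem_product] at hp
    obtain ⟨hσ, hτ⟩ := hp
    rw [Finset.mem_filter] at hτ ⊢
    exact ⟨combine_mem n i hn σ hσ τ hτ.1, by rw [tail_combine]; exact hτ.2⟩
  · rintro ⟨σ, τ⟩ h₁ ⟨σ', τ'⟩ h₂ hcomb
    have hσ : σ = σ' := by
      funext s
      have := congrFun hcomb ⟨(s : ℕ), by have := s.2; omega⟩
      unfold combine at this
      rw [dif_pos (by exact s.2), dif_pos (by exact s.2)] at this
      simpa using this
    have hτ : τ = τ' := by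
      funext t
      have hidx : n - 1 - i + (t : ℕ) < n - 1 := by have := t.2; omega
      have := congrFun hcomb ⟨n - 1 - i + (t : ℕ), hidx⟩
      unfold combine at this
      rw [dif_neg (by simp only [Fin.val_mk]; omega), dif_neg (by simp only [Fin.val_mk]; omega)] at this
      have e1 : n - 1 - i + (t : ℕ) - (n - 1 - i) = (t : ℕ) := by omega
      simp only [e1] at this
      have h1 := congrArg Prod.fst this
      have h2 := congrArg Prod.snd this
      simp only at h1 h2
      have h1' : (τ t).1 = (τ' t).1 := by
        apply Fin.castLE_injective hn
        simpa using h1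
      have h2' : (τ t).2 = (τ' t).2 := by
        apply Fin.castLE_injective hn
        simpa using h2
      exact Prod.ext h1' h2'
    simp [hσ, hτ]
  · intro ω hω
    rw [Finset.mem_filter] at hω
    obtain ⟨hωs, hE⟩ := hω
    have hval : ValidSeq n ω := by
      simpa [coalSpace] using hωs
    refine ⟨⟨fun s => ω ⟨(s : ℕ), by have := s.2; omega⟩, tailOf n i ω⟩, ?_, ?_⟩
    · rw [Finset.mem_product]
      constructor
      · simp only [PreSet, Finset.mem_filter, Finset.mem_univ, true_and]
        intro s
        exact hval ⟨(s : ℕ), by have := s.2; omega⟩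
      · rw [Finset.mem_filter]
        refine ⟨?_, ?_⟩
        · simp only [coalSpace, Finset.mem_filter, Finset.mem_univ, true_and]
          exact tailOf_valid n i hn ω hval
        · rw [tailAbs_tailOf n i hn ω hval]
          exact hE
    · exact combine_tailOf n i hn ω hval

lemma preSet_nonempty (n i : ℕ) (h1 : 1 ≤ i) (hn : i < n) : (PreSet n i).Nonempty := by
  have h2 : 2 ≤ n := by omega
  refine ⟨fun s => (⟨0, by omega⟩, ⟨1, by omega⟩), ?_⟩
  simp only [PreSet, Finset.mem_filter, Finset.mem_univ, true_and]
  intro s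
  have := s.2
  refine ⟨by omega, ?_⟩
  show 1 < n - (s : ℕ)
  omega

lemma coalP_tail (n i : ℕ) (h1 : 1 ≤ i) (hn : i < n) (E : (ℕ → ℕ × ℕ) → Prop) :
    coalP n (fun ω => E (tailAbs n i ω)) = coalP (i + 1) (fun τ => E (tailAbs (i + 1) i τ)) := by
  have hc := count_eq n i hn E
  have hcT := count_eq n i hn (fun _ => True)
  simp at hcT
  unfold coalP
  rw [hc, hcT]
  push_cast
  rw [mul_div_mul_left]
  exact Nat.cast_ne_zero.2 (Finset.card_ne_zero_of_mem (preSet_nonempty n i h1 hn).choose_spec)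

lemma coalP_row (i n : ℕ) (h1 : 1 ≤ i) (hn : i < n) (v : ℕ → ℕ) :
    coalP n (fun ω => ∀ j ∈ Finset.Icc 1 i, FmatOf n ω i j = v j) =
      coalP (i + 1) (fun τ => ∀ j ∈ Finset.Icc 1 i, Gcard i (tailAbs (i + 1) i τ) (i - j) = v j) := by
  have hstep : ((coalSpace n).filter (fun ω => ∀ j ∈ Finset.Icc 1 i, FmatOf n ω i j = v j)) =
      ((coalSpace n).filter (fun ω => ∀ j ∈ Finset.Icc 1 i, Gcard i (tailAbs n i ω) (i - j) = v j)) := by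
    ext ω
    simp only [Finset.mem_filter, coalSpace, Finset.mem_univ, true_and]
    constructor
    · rintro ⟨hval, h⟩
      exact ⟨hval, fun j hj => by
        rw [← fmat_eq n i j hn (Finset.mem_Icc.1 hj).2 ω hval]; exact h j hj⟩
    · rintro ⟨hval, h⟩
      exact ⟨hval, fun j hj => by
        rw [fmat_eq n i j hn (Finset.mem_Icc.1 hj).2 ω hval]; exact h j hj⟩
  have := coalP_tail n i h1 hn (fun τ' => ∀ j ∈ Finset.Icc 1 i, Gcard i τ' (i - j) = v j)
  calc coalP n (fun ω => ∀ j ∈ Finset.Icc 1 i, FmatOf n ω i j = v j)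
      = coalP n (fun ω => ∀ j ∈ Finset.Icc 1 i, Gcard i (tailAbs n i ω) (i - j) = v j) := by
        unfold coalP; rw [hstep]
    _ = _ := this


/-- Under the Yule model, the probability distribution of the
`i`-th row `(F_{i1}, …, F_{ii})` of the F-matrix does not depend on the total
number of leaves `n` (for any `n > i`). -/
theorem yule_fmat_row_distribution_independent_of_n (i n n' : ℕ)
    (hi : 1 ≤ i) (hn : i < n) (hn' : i < n') :
    ∀ v : ℕ → ℕ,
      coalP n (fun ω => ∀ j ∈ Finset.Icc 1 i, FmatOf n ω i j = v j) =
      coalP n' (fun ω => ∀ j ∈ Finset.Icc 1 i, FmatOf n' ω i j = v j) := by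
  intro v
  rw [coalP_row i n hi hn v, coalP_row i n' hi hn' v]
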